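/- arXiv:math/0505204 — 2 statements merged into one kernel-verified Lean document; each statement's English description precedes it below -/
import Mathlib

section
/- Let P, Q ∈ Γ_n and let r, R satisfy 0 < r ≤ p_i/q_i ≤ R < ∞ for all i. If s ≤ 0 then (r^{2−s}/(r+1)²)·Φ_s(P||Q) ≤ F(Q||P) ≤ (R^{2−s}/(R+1)²)·Φ_s(P||Q), and if s ≥ 2 then (R^{2−s}/(R+1)²)·Φ_s(P||Q) ≤ F(Q||P) ≤ (r^{2−s}/(r+1)²)·Φ_s(P||Q). -/
open Real

/-- Relative information of type `s` (Cressie–Read generalization of Kullback–Leibler). -/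
noncomputable def Phi {n : ℕ} (s : ℝ) (p q : Fin n → ℝ) : ℝ :=
  if s = 0 then ∑ i, q i * Real.log (q i / p i)
  else if s = 1 then ∑ i, p i * Real.log (p i / q i)
  else (s * (s - 1))⁻¹ * ((∑ i, p i ^ s * q i ^ (1 - s)) - 1)

/-- Kullback–Leibler relative information `K(P‖Q)`. -/
noncomputable def KL {n : ℕ} (p q : Fin n → ℝ) : ℝ :=
  ∑ i, p i * Real.log (p i / q i)

/-- Relative J-divergence `D(P‖Q)`. -/
noncomputable def relJ {n : ℕ} (p q : Fin n → ℝ) : ℝ :=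
  ∑ i, (p i - q i) * Real.log ((p i + q i) / (2 * q i))

/-- Relative JS-divergence `F(P‖Q)`. -/
noncomputable def relJS {n : ℕ} (p q : Fin n → ℝ) : ℝ :=
  ∑ i, p i * Real.log (2 * p i / (p i + q i))

/-- Relative AG-divergence `G(P‖Q)`. -/
noncomputable def relAG {n : ℕ} (p q : Fin n → ℝ) : ℝ :=
  ∑ i, ((p i + q i) / 2) * Real.log ((p i + q i) / (2 * p i))

/-- J-divergence `J(P‖Q)`. -/
noncomputable def Jdiv {n : ℕ} (p q : Fin n → ℝ) : ℝ :=
  ∑ i, (p i - q i) * Real.log (p i / q i)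

/-- JS-divergence (information radius) `I(P‖Q)`. -/
noncomputable def JSdiv {n : ℕ} (p q : Fin n → ℝ) : ℝ :=
  (relJS p q + relJS q p) / 2

/-- AG-divergence `T(P‖Q)`. -/
noncomputable def AGdiv {n : ℕ} (p q : Fin n → ℝ) : ℝ :=
  (relAG p q + relAG q p) / 2

/-- Hellinger discrimination `h(P‖Q)`. -/
noncomputable def hell {n : ℕ} (p q : Fin n → ℝ) : ℝ :=
  (1 / 2) * ∑ i, (Real.sqrt (p i) - Real.sqrt (q i)) ^ 2

noncomputable def gAux (s : ℝ) (x : ℝ) : ℝ :=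
  if s = 0 then -Real.log x else (x ^ s - 1) / (s * (s - 1))

noncomputable def fAux (x : ℝ) : ℝ := Real.log 2 - Real.log (x + 1)

lemma hasDeriv_g1 (s : ℝ) (hs : s ≠ 1) {x : ℝ} (hx : 0 < x) :
    HasDerivAt (gAux s) (x ^ (s - 1) / (s - 1)) x := by
  rcases eq_or_ne s 0 with h0 | h0
  · subst h0
    have hg : gAux 0 = fun y => -Real.log y := by funext y; simp [gAux]
    rw [hg]
    have := (Real.hasDerivAt_log hx.ne').neg
    refine this.congr_deriv (Eq.symm ?_)
    rw [show (0:ℝ) - 1 = -1 by ring, Real.rpow_neg_one]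
    field_simp
  · have hg : gAux s = fun y => (y ^ s - 1) / (s * (s - 1)) := by funext y; simp [gAux, h0]
    rw [hg]
    have h := ((Real.hasDerivAt_rpow_const (p := s) (Or.inl hx.ne')).sub_const 1).div_const
      (s * (s - 1))
    refine h.congr_deriv (Eq.symm ?_)
    have hs1 : s - 1 ≠ 0 := sub_ne_zero.mpr hs
    field_simp

lemma hasDeriv_g2 (s : ℝ) (hs : s ≠ 1) {x : ℝ} (hx : 0 < x) :
    HasDerivAt (fun y => y ^ (s - 1) / (s - 1)) (x ^ (s - 2)) x := by
  have h := (Real.hasDerivAt_rpow_const (p := s - 1) (Or.inl hx.ne')).div_const (s - 1)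
  refine h.congr_deriv (Eq.symm ?_)
  have hs1 : s - 1 ≠ 0 := sub_ne_zero.mpr hs
  rw [show s - 1 - 1 = s - 2 by ring]
  field_simp

lemma hasDeriv_f {x : ℝ} (hx : 0 < x) : HasDerivAt fAux (-(x + 1)⁻¹) x := by
  have h1 : HasDerivAt (fun y : ℝ => y + 1) 1 x := (hasDerivAt_id x).add_const 1
  have h2 : (0:ℝ) < x + 1 := by linarith
  have h3 := (Real.hasDerivAt_log h2.ne').comp x h1
  have h4 := h3.const_sub (Real.log 2)
  refine h4.congr_deriv (Eq.symm ?_)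
  simp

lemma hasDeriv_f2 {x : ℝ} (hx : 0 < x) :
    HasDerivAt (fun y : ℝ => -(y + 1)⁻¹) (((x + 1) ^ 2)⁻¹) x := by
  have h1 : HasDerivAt (fun y : ℝ => y + 1) 1 x := (hasDerivAt_id x).add_const 1
  have h2 : (0:ℝ) < x + 1 := by linarith
  have h3 := (h1.inv h2.ne').neg
  refine h3.congr_deriv (Eq.symm ?_)
  field_simp

lemma convAux (s a b r R : ℝ) (hs : s ≠ 1) (hr : 0 < r)
    (hcond : ∀ x ∈ Set.Ioo r R, 0 ≤ a * x ^ (s - 2) + b * ((x + 1) ^ 2)⁻¹) :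
    ConvexOn ℝ (Set.Icc r R) (fun x => a * gAux s x + b * fAux x) := by
  have hpos : ∀ x ∈ Set.Icc r R, 0 < x := fun x hx => hr.trans_le hx.1
  have hposI : ∀ x ∈ Set.Ioo r R, 0 < x := fun x hx => hr.trans hx.1
  apply convexOn_of_hasDerivWithinAt2_nonneg (convex_Icc r R)
    (f' := fun x => a * (x ^ (s - 1) / (s - 1)) + b * (-(x + 1)⁻¹))
    (f'' := fun x => a * x ^ (s - 2) + b * ((x + 1) ^ 2)⁻¹)
  · intro x hx
    exact (((hasDeriv_g1 s hs (hpos x hx)).const_mul a).add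
      ((hasDeriv_f (hpos x hx)).const_mul b)).continuousAt.continuousWithinAt
  · intro x hx
    rw [interior_Icc] at hx
    exact (((hasDeriv_g1 s hs (hposI x hx)).const_mul a).add
      ((hasDeriv_f (hposI x hx)).const_mul b)).hasDerivWithinAt
  · intro x hx
    rw [interior_Icc] at hx
    exact (((hasDeriv_g2 s hs (hposI x hx)).const_mul a).add
      ((hasDeriv_f2 (hposI x hx)).const_mul b)).hasDerivWithinAt
  · rw [interior_Icc]; exact hcond

lemma jensenAux {n : ℕ} (q x : Fin n → ℝ) (r R : ℝ) {h : ℝ → ℝ}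
    (hconv : ConvexOn ℝ (Set.Icc r R) h) (hq : ∀ i, 0 ≤ q i) (hq1 : ∑ i, q i = 1)
    (hx1 : ∑ i, q i * x i = 1) (hmem : ∀ i, x i ∈ Set.Icc r R) (h1 : h 1 = 0) :
    0 ≤ ∑ i, q i * h (x i) := by
  have := hconv.map_sum_le (fun i _ => hq i) (by simpa using hq1) (fun i _ => hmem i)
  simp only [smul_eq_mul] at this
  rw [hx1, h1] at this
  exact this

lemma eta_mono (s : ℝ) (hs : s ≤ 0) {a b : ℝ} (ha : 0 < a) (hab : a ≤ b) :
    a ^ (2 - s) / (a + 1) ^ 2 ≤ b ^ (2 - s) / (b + 1) ^ 2 := by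
  have hb : 0 < b := ha.trans_le hab
  have ha1 : (0:ℝ) < a + 1 := by linarith
  have hb1 : (0:ℝ) < b + 1 := by linarith
  rw [div_le_div_iff₀ (by positivity) (by positivity)]
  have h1 : a ^ (2 - s) = (a / b) ^ (2 - s) * b ^ (2 - s) := by
    rw [← Real.mul_rpow (by positivity) hb.le, div_mul_cancel₀ _ hb.ne']
  have h2 : (a / b) ^ (2 - s) ≤ (a / b) ^ (2:ℝ) :=
    Real.rpow_le_rpow_of_exponent_ge (by positivity) ((div_le_one hb).mpr hab) (by linarith)
  have h3 : (a / b) ^ (2:ℝ) = (a / b) ^ (2:ℕ) := by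
    rw [show (2:ℝ) = ((2:ℕ):ℝ) by norm_num, Real.rpow_natCast]
  have h4 : (a / b) ^ (2:ℕ) ≤ ((a + 1) / (b + 1)) ^ (2:ℕ) := by
    apply pow_le_pow_left₀ (by positivity)
    rw [div_le_div_iff₀ hb hb1]; nlinarith
  have h5 : a ^ (2 - s) ≤ ((a + 1) / (b + 1)) ^ (2:ℕ) * b ^ (2 - s) := by
    rw [h1]
    exact mul_le_mul_of_nonneg_right (h2.trans (h3.le.trans h4)) (Real.rpow_nonneg hb.le _)
  calc a ^ (2 - s) * (b + 1) ^ 2 ≤ (((a + 1) / (b + 1)) ^ (2:ℕ) * b ^ (2 - s)) * (b + 1) ^ 2 :=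
        mul_le_mul_of_nonneg_right h5 (by positivity)
    _ = b ^ (2 - s) * (a + 1) ^ 2 := by
        rw [div_pow]; field_simp

lemma eta_anti (s : ℝ) (hs : 2 ≤ s) {a b : ℝ} (ha : 0 < a) (hab : a ≤ b) :
    b ^ (2 - s) / (b + 1) ^ 2 ≤ a ^ (2 - s) / (a + 1) ^ 2 := by
  have hb : 0 < b := ha.trans_le hab
  have h1 : b ^ (2 - s) ≤ a ^ (2 - s) := Real.rpow_le_rpow_of_nonpos ha hab (by linarith)
  have h2 : (a + 1) ^ 2 ≤ (b + 1) ^ 2 := by nlinarith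
  exact div_le_div₀ (Real.rpow_nonneg ha.le _) h1 (by positivity) h2

lemma relJS_eq {n : ℕ} (p q : Fin n → ℝ) (hp : ∀ i, 0 < p i) (hq : ∀ i, 0 < q i) :
    relJS q p = ∑ i, q i * fAux (p i / q i) := by
  unfold relJS fAux
  refine Finset.sum_congr rfl fun i _ => ?_
  have hpi := hp i; have hqi := hq i
  congr 1
  rw [show p i / q i + 1 = (p i + q i) / q i by field_simp,
    Real.log_div (by positivity) hqi.ne',
    Real.log_div (by positivity) (by positivity), Real.log_mul (by norm_num) hqi.ne']
  ring_nf

lemma Phi_eq {n : ℕ} (s : ℝ) (hs : s ≠ 1) (p q : Fin n → ℝ)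
    (hp : ∀ i, 0 < p i) (hq : ∀ i, 0 < q i) (hq1 : ∑ i, q i = 1) :
    Phi s p q = ∑ i, q i * gAux s (p i / q i) := by
  rcases eq_or_ne s 0 with h0 | h0
  · subst h0
    rw [show Phi 0 p q = ∑ i, q i * Real.log (q i / p i) from if_pos rfl]
    have hg : ∀ x : ℝ, gAux 0 x = -Real.log x := fun x => if_pos rfl
    simp only [hg]
    refine Finset.sum_congr rfl fun i _ => ?_
    congr 1
    rw [← Real.log_inv, inv_div]
  · have hP : Phi s p q = (s * (s - 1))⁻¹ * ((∑ i, p i ^ s * q i ^ (1 - s)) - 1) := by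
      unfold Phi; rw [if_neg h0, if_neg hs]
    have hg : ∀ x : ℝ, gAux s x = (x ^ s - 1) / (s * (s - 1)) := fun x => if_neg h0
    simp only [hg]
    have key : ∀ i : Fin n, q i * (((p i / q i) ^ s - 1) / (s * (s - 1)))
        = (s * (s - 1))⁻¹ * (p i ^ s * q i ^ (1 - s) - q i) := by
      intro i
      have hpi := hp i; have hqi := hq i
      have h1 : (p i / q i) ^ s = p i ^ s / q i ^ s := Real.div_rpow hpi.le hqi.le s
      have h2 : q i ^ (1 - s) = q i / q i ^ s := by
        rw [Real.rpow_sub hqi, Real.rpow_one]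
      have h3 : (0:ℝ) < q i ^ s := Real.rpow_pos_of_pos hqi s
      rw [h1, h2]
      field_simp
    symm
    calc ∑ i, q i * (((p i / q i) ^ s - 1) / (s * (s - 1)))
        = ∑ i, (s * (s - 1))⁻¹ * (p i ^ s * q i ^ (1 - s) - q i) :=
          Finset.sum_congr rfl fun i _ => key i
      _ = (s * (s - 1))⁻¹ * ∑ i, (p i ^ s * q i ^ (1 - s) - q i) := by
          rw [Finset.mul_sum]
      _ = Phi s p q := by
          rw [Finset.sum_sub_distrib, hq1, hP]

lemma gAux_one (s : ℝ) : gAux s 1 = 0 := by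
  unfold gAux; split <;> simp

lemma fAux_one : fAux 1 = 0 := by
  unfold fAux; norm_num

lemma ratio_sum {n : ℕ} (p q : Fin n → ℝ) (hq : ∀ i, 0 < q i) (hp1 : ∑ i, p i = 1) :
    ∑ i, q i * (p i / q i) = 1 := by
  rw [Finset.sum_congr rfl fun i _ => mul_div_cancel₀ (p i) (hq i).ne']
  exact hp1

lemma main_lower {n : ℕ} (p q : Fin n → ℝ) (hp : ∀ i, 0 < p i) (hq : ∀ i, 0 < q i)
    (hp1 : ∑ i, p i = 1) (hq1 : ∑ i, q i = 1) (r R : ℝ) (hr : 0 < r)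
    (hlow : ∀ i, r ≤ p i / q i) (hupp : ∀ i, p i / q i ≤ R) (s : ℝ) (hs : s ≠ 1)
    (c : ℝ) (hc : ∀ x ∈ Set.Ioo r R, c ≤ x ^ (2 - s) / (x + 1) ^ 2) :
    c * Phi s p q ≤ relJS q p := by
  have hcond : ∀ x ∈ Set.Ioo r R, 0 ≤ (-c) * x ^ (s - 2) + 1 * ((x + 1) ^ 2)⁻¹ := by
    intro x hx
    have hxp : 0 < x := hr.trans hx.1
    have hpow : (0:ℝ) < x ^ (2 - s) := Real.rpow_pos_of_pos hxp _
    have he : x ^ (s - 2) = (x ^ (2 - s))⁻¹ := by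
      rw [show s - 2 = -(2 - s) by ring, Real.rpow_neg hxp.le]
    have h4 : c * (x + 1) ^ 2 ≤ x ^ (2 - s) := (le_div_iff₀ (by positivity)).mp (hc x hx)
    have h5 : c * (x ^ (2 - s))⁻¹ ≤ ((x + 1) ^ 2)⁻¹ := by
      rw [show c * (x ^ (2 - s))⁻¹ = c / x ^ (2 - s) by ring, ← one_div,
        div_le_div_iff₀ hpow (by positivity)]
      linarith
    rw [he]; linarith
  have hconv := convAux s (-c) 1 r R hs hr hcond
  have h1 : (-c) * gAux s 1 + 1 * fAux 1 = 0 := by rw [gAux_one, fAux_one]; ring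
  have hj := jensenAux q (fun i => p i / q i) r R hconv (fun i => (hq i).le) hq1
    (ratio_sum p q hq hp1) (fun i => ⟨hlow i, hupp i⟩) h1
  have hsum : ∑ i, q i * ((-c) * gAux s (p i / q i) + 1 * fAux (p i / q i))
      = (-c) * (∑ i, q i * gAux s (p i / q i)) + ∑ i, q i * fAux (p i / q i) := by
    rw [Finset.mul_sum, ← Finset.sum_add_distrib]
    exact Finset.sum_congr rfl fun i _ => by ring
  rw [hsum] at hj
  rw [relJS_eq p q hp hq, Phi_eq s hs p q hp hq hq1]
  linarith

lemma main_upper {n : ℕ} (p q : Fin n → ℝ) (hp : ∀ i, 0 < p i) (hq : ∀ i, 0 < q i)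
    (hp1 : ∑ i, p i = 1) (hq1 : ∑ i, q i = 1) (r R : ℝ) (hr : 0 < r)
    (hlow : ∀ i, r ≤ p i / q i) (hupp : ∀ i, p i / q i ≤ R) (s : ℝ) (hs : s ≠ 1)
    (c : ℝ) (hc : ∀ x ∈ Set.Ioo r R, x ^ (2 - s) / (x + 1) ^ 2 ≤ c) :
    relJS q p ≤ c * Phi s p q := by
  have hcond : ∀ x ∈ Set.Ioo r R, 0 ≤ c * x ^ (s - 2) + (-1) * ((x + 1) ^ 2)⁻¹ := by
    intro x hx
    have hxp : 0 < x := hr.trans hx.1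
    have hpow : (0:ℝ) < x ^ (2 - s) := Real.rpow_pos_of_pos hxp _
    have he : x ^ (s - 2) = (x ^ (2 - s))⁻¹ := by
      rw [show s - 2 = -(2 - s) by ring, Real.rpow_neg hxp.le]
    have h4 : x ^ (2 - s) ≤ c * (x + 1) ^ 2 := (div_le_iff₀ (by positivity)).mp (hc x hx)
    have h5 : ((x + 1) ^ 2)⁻¹ ≤ c * (x ^ (2 - s))⁻¹ := by
      rw [show c * (x ^ (2 - s))⁻¹ = c / x ^ (2 - s) by ring, ← one_div,
        div_le_div_iff₀ (by positivity) hpow]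
      linarith
    rw [he]; linarith
  have hconv := convAux s c (-1) r R hs hr hcond
  have h1 : c * gAux s 1 + (-1) * fAux 1 = 0 := by rw [gAux_one, fAux_one]; ring
  have hj := jensenAux q (fun i => p i / q i) r R hconv (fun i => (hq i).le) hq1
    (ratio_sum p q hq hp1) (fun i => ⟨hlow i, hupp i⟩) h1
  have hsum : ∑ i, q i * (c * gAux s (p i / q i) + (-1) * fAux (p i / q i))
      = c * (∑ i, q i * gAux s (p i / q i)) + (-1) * ∑ i, q i * fAux (p i / q i) := by
    rw [Finset.mul_sum, Finset.mul_sum, ← Finset.sum_add_distrib]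
    exact Finset.sum_congr rfl fun i _ => by ring
  rw [hsum] at hj
  rw [relJS_eq p q hp hq, Phi_eq s hs p q hp hq hq1]
  linarith

theorem stmt8 {n : ℕ} (hn : 2 ≤ n) (p q : Fin n → ℝ)
    (hp : ∀ i, 0 < p i) (hq : ∀ i, 0 < q i)
    (hp1 : ∑ i, p i = 1) (hq1 : ∑ i, q i = 1)
    (r R : ℝ) (hr : 0 < r)
    (hlow : ∀ i, r ≤ p i / q i) (hupp : ∀ i, p i / q i ≤ R) (s : ℝ) :
    (s ≤ 0 →
      (r ^ (2 - s) / (r + 1) ^ 2) * Phi s p q ≤ relJS q p ∧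
        relJS q p ≤ (R ^ (2 - s) / (R + 1) ^ 2) * Phi s p q) ∧
    (2 ≤ s →
      (R ^ (2 - s) / (R + 1) ^ 2) * Phi s p q ≤ relJS q p ∧
        relJS q p ≤ (r ^ (2 - s) / (r + 1) ^ 2) * Phi s p q) := by
  constructor
  · intro hs0
    have hs : s ≠ 1 := by intro h; linarith
    refine ⟨main_lower p q hp hq hp1 hq1 r R hr hlow hupp s hs _
      (fun x hx => eta_mono s hs0 hr hx.1.le),
      main_upper p q hp hq hp1 hq1 r R hr hlow hupp s hs _
      (fun x hx => eta_mono s hs0 (hr.trans hx.1) hx.2.le)⟩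
  · intro hs2
    have hs : s ≠ 1 := by intro h; linarith
    refine ⟨main_lower p q hp hq hp1 hq1 r R hr hlow hupp s hs _
      (fun x hx => eta_anti s hs2 (hr.trans hx.1) hx.2.le),
      main_upper p q hp hq hp1 hq1 r R hr hlow hupp s hs _
      (fun x hx => eta_anti s hs2 hr hx.1.le)⟩
end

section
/- Let P, Q ∈ Γ_n and let r, R satisfy 0 < r ≤ p_i/q_i ≤ R < ∞ for all i. If s ≤ 1 then (r^{2−s}/(2(r+1)))·Φ_s(P||Q) ≤ G(Q||P) ≤ (R^{2−s}/(2(R+1)))·Φ_s(P||Q), and if s ≥ 2 then (R^{2−s}/(2(R+1)))·Φ_s(P||Q) ≤ G(Q||P) ≤ (r^{2−s}/(2(r+1)))·Φ_s(P||Q). -/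
open Real

section AuxStmt11
open Real Set

/-- pointwise generator of Phi -/
noncomputable def phiG (s x : ℝ) : ℝ :=
  if s = 0 then -Real.log x else if s = 1 then x * Real.log x
  else (s * (s - 1))⁻¹ * (x ^ s - 1)

noncomputable def phiG' (s x : ℝ) : ℝ :=
  if s = 0 then -x⁻¹ else if s = 1 then Real.log x + 1
  else (s - 1)⁻¹ * x ^ (s - 1)

noncomputable def gG (x : ℝ) : ℝ := ((x + 1) / 2) * Real.log ((x + 1) / 2)

noncomputable def gG' (x : ℝ) : ℝ := (Real.log ((x + 1) / 2) + 1) / 2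

lemma phiG_one (s : ℝ) : phiG s 1 = 0 := by
  unfold phiG; split_ifs <;> simp

lemma gG_one : gG 1 = 0 := by unfold gG; norm_num

lemma phiG_hasDeriv (s : ℝ) {x : ℝ} (hx : 0 < x) :
    HasDerivAt (phiG s) (phiG' s x) x := by
  unfold phiG phiG'
  rcases eq_or_ne s 0 with rfl | h0
  · simp only [if_pos rfl]; exact (Real.hasDerivAt_log hx.ne').neg
  rcases eq_or_ne s 1 with rfl | h1
  · simp only [if_neg (by norm_num : (1:ℝ) ≠ 0), if_pos rfl]
    have := (hasDerivAt_id x).mul (Real.hasDerivAt_log hx.ne')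
    convert this using 1 <;> try rfl
    simp [hx.ne']
  · simp only [if_neg h0, if_neg h1]
    have := (Real.hasDerivAt_rpow_const (p := s) (Or.inl hx.ne')).sub_const 1
    have h2 := this.const_mul ((s * (s - 1))⁻¹)
    have hs1 : s - 1 ≠ 0 := sub_ne_zero.mpr h1
    convert h2 using 1 <;> try rfl
    field_simp

lemma phiG'_hasDeriv (s : ℝ) {x : ℝ} (hx : 0 < x) :
    HasDerivAt (phiG' s) (x ^ (s - 2)) x := by
  unfold phiG'
  rcases eq_or_ne s 0 with rfl | h0
  · simp only [if_pos rfl]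
    have := (hasDerivAt_inv hx.ne').neg
    convert this using 1 <;> try rfl
    rw [show (0:ℝ) - 2 = -2 by norm_num, Real.rpow_neg hx.le, Real.rpow_two]
    norm_num
  rcases eq_or_ne s 1 with rfl | h1
  · simp only [if_neg h0, if_pos rfl]
    have := (Real.hasDerivAt_log hx.ne').add_const 1
    convert this using 1 <;> try rfl
    rw [show (1:ℝ) - 2 = -1 by norm_num, Real.rpow_neg hx.le, Real.rpow_one]
  · simp only [if_neg h0, if_neg h1]
    have := (Real.hasDerivAt_rpow_const (p := s - 1) (Or.inl hx.ne')).const_mul ((s - 1)⁻¹)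
    have hs1 : s - 1 ≠ 0 := sub_ne_zero.mpr h1
    convert this using 1 <;> try rfl
    rw [show s - 1 - 1 = s - 2 by ring]
    field_simp

lemma gG_hasDeriv {x : ℝ} (hx : 0 < x) : HasDerivAt gG (gG' x) x := by
  have hu : (0:ℝ) < (x + 1) / 2 := by linarith
  have h1 : HasDerivAt (fun y : ℝ => (y + 1) / 2) (1 / 2) x := by
    simpa using ((hasDerivAt_id x).add_const 1).div_const 2
  have h2 : HasDerivAt (fun y : ℝ => Real.log ((y + 1) / 2)) (((x + 1) / 2)⁻¹ * (1 / 2)) x := by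
    exact (Real.hasDerivAt_log hu.ne').comp x h1
  have := h1.mul h2
  unfold gG gG'
  convert this using 1 <;> try rfl
  field_simp

lemma gG'_hasDeriv {x : ℝ} (hx : 0 < x) : HasDerivAt gG' ((2 * (x + 1))⁻¹) x := by
  have hu : (0:ℝ) < (x + 1) / 2 := by linarith
  have h1 : HasDerivAt (fun y : ℝ => (y + 1) / 2) (1 / 2) x := by
    simpa using ((hasDerivAt_id x).add_const 1).div_const 2
  have h2 : HasDerivAt (fun y : ℝ => Real.log ((y + 1) / 2)) (((x + 1) / 2)⁻¹ * (1 / 2)) x := by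
    exact (Real.hasDerivAt_log hu.ne').comp x h1
  have := (h2.add_const 1).div_const 2
  unfold gG'
  convert this using 1 <;> try rfl
  field_simp

/-- convexity from derivatives on positive points -/
lemma convexOn_aux {f f' f'' : ℝ → ℝ} {D : Set ℝ} (hD : Convex ℝ D) (hD0 : D ⊆ Set.Ioi 0)
    (h1 : ∀ x, 0 < x → HasDerivAt f (f' x) x)
    (h2 : ∀ x, 0 < x → HasDerivAt f' (f'' x) x)
    (h0 : ∀ x ∈ D, 0 ≤ f'' x) : ConvexOn ℝ D f := by
  have hev : ∀ x : ℝ, 0 < x → deriv f =ᶠ[nhds x] f' := by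
    intro x hx
    filter_upwards [Ioi_mem_nhds hx] with y hy using (h1 y hy).deriv
  apply convexOn_of_deriv2_nonneg' hD
  · exact fun x hx => ((h1 x (hD0 hx)).differentiableAt).differentiableWithinAt
  · intro x hx
    have hx0 : 0 < x := hD0 hx
    exact (((h2 x hx0).differentiableAt).congr_of_eventuallyEq (hev x hx0)).differentiableWithinAt
  · intro x hx
    have hx0 : 0 < x := hD0 hx
    have : deriv^[2] f x = deriv (deriv f) x := rfl
    rw [this, (hev x hx0).deriv_eq, (h2 x hx0).deriv]
    exact h0 x hx

section sums
variable {n : ℕ} (p q : Fin n → ℝ)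

lemma sum_gG (hp : ∀ i, 0 < p i) (hq : ∀ i, 0 < q i) :
    ∑ i, q i * gG (p i / q i) = relAG q p := by
  unfold relAG gG
  apply Finset.sum_congr rfl
  intro i _
  have hqi := (hq i).ne'
  have h : (p i / q i + 1) / 2 = (q i + p i) / (2 * q i) := by field_simp; ring
  rw [h, show q i * ((q i + p i) / (2 * q i) * Real.log ((q i + p i) / (2 * q i)))
      = (q i * ((q i + p i) / (2 * q i))) * Real.log ((q i + p i) / (2 * q i)) from by ring,
    show q i * ((q i + p i) / (2 * q i)) = (q i + p i) / 2 from by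
      rw [eq_comm, div_eq_iff (two_ne_zero)]; field_simp]

lemma sum_phiG (s : ℝ) (hp : ∀ i, 0 < p i) (hq : ∀ i, 0 < q i) (hq1 : ∑ i, q i = 1) :
    ∑ i, q i * phiG s (p i / q i) = Phi s p q := by
  unfold Phi phiG
  rcases eq_or_ne s 0 with rfl | h0
  · norm_num
    rw [show ∑ i, q i * Real.log (q i / p i) = ∑ i, -(q i * Real.log (p i / q i)) from
        Finset.sum_congr rfl fun i _ => by rw [show q i / p i = (p i / q i)⁻¹ from (inv_div _ _).symm, Real.log_inv]; ring,
      Finset.sum_neg_distrib]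
  rcases eq_or_ne s 1 with rfl | h1
  · norm_num
    apply Finset.sum_congr rfl
    intro i _
    have hqi := (hq i).ne'
    field_simp
  · simp only [if_neg h0, if_neg h1]
    have key : ∀ i : Fin n, q i * ((s * (s - 1))⁻¹ * ((p i / q i) ^ s - 1)) =
        (s * (s - 1))⁻¹ * (p i ^ s * q i ^ (1 - s)) - (s * (s - 1))⁻¹ * q i := by
      intro i
      have hqi := hq i
      have hpi := hp i
      have hdr : (p i / q i) ^ s = p i ^ s / q i ^ s := Real.div_rpow hpi.le hqi.le s
      have hqs : (0:ℝ) < q i ^ s := Real.rpow_pos_of_pos hqi s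
      have e1 : q i * (p i ^ s / q i ^ s) = p i ^ s * q i ^ (1 - s) := by
        rw [Real.rpow_sub hqi, Real.rpow_one]
        field_simp
      calc q i * ((s * (s - 1))⁻¹ * ((p i / q i) ^ s - 1))
          = (s * (s - 1))⁻¹ * (q i * (p i ^ s / q i ^ s)) - (s * (s - 1))⁻¹ * q i := by
            rw [hdr]; ring
        _ = (s * (s - 1))⁻¹ * (p i ^ s * q i ^ (1 - s)) - (s * (s - 1))⁻¹ * q i := by rw [e1]
    rw [Finset.sum_congr rfl (fun i _ => key i), Finset.sum_sub_distrib,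
      ← Finset.mul_sum, ← Finset.mul_sum, hq1]
    ring

lemma jensen_core (hp : ∀ i, 0 < p i) (hq : ∀ i, 0 < q i)
    (hp1 : ∑ i, p i = 1) (hq1 : ∑ i, q i = 1)
    {r R : ℝ} (f : ℝ → ℝ) (hf : ConvexOn ℝ (Set.Icc r R) f) (hf1 : f 1 = 0)
    (hmem : ∀ i, p i / q i ∈ Set.Icc r R) :
    0 ≤ ∑ i, q i * f (p i / q i) := by
  have h := hf.map_sum_le (t := Finset.univ) (w := q) (p := fun i => p i / q i)
    (fun i _ => (hq i).le) hq1 (fun i _ => hmem i)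
  have hsum : ∑ i, q i • (p i / q i) = 1 := by
    rw [← hp1]
    apply Finset.sum_congr rfl
    intro i _
    have := (hq i).ne'
    simp [smul_eq_mul]
    field_simp
  rw [hsum, hf1] at h
  simpa [smul_eq_mul] using h
end sums

/-- monotonicity of eta for s ≤ 1 -/
lemma eta_mono_le {r x s : ℝ} (hr : 0 < r) (hrx : r ≤ x) (hs : s ≤ 1) :
    r ^ (2 - s) / (2 * (r + 1)) ≤ x ^ (2 - s) / (2 * (x + 1)) := by
  have hx : 0 < x := lt_of_lt_of_le hr hrx
  rw [div_le_div_iff₀ (by linarith) (by linarith)]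
  have h1 : r ^ (2 - s - 1) ≤ x ^ (2 - s - 1) := Real.rpow_le_rpow hr.le hrx (by linarith)
  have h2 : r ^ (2 - s) = r ^ (2 - s - 1) * r := by
    rw [← Real.rpow_add_one hr.ne']; ring_nf
  have h3 : x ^ (2 - s) = x ^ (2 - s - 1) * x := by
    rw [← Real.rpow_add_one hx.ne']; ring_nf
  have h4 : (0:ℝ) < r ^ (2 - s - 1) := Real.rpow_pos_of_pos hr _
  nlinarith [mul_pos hr hx]

/-- antitonicity of eta for s ≥ 2 -/
lemma eta_anti_le {r x s : ℝ} (hr : 0 < r) (hrx : r ≤ x) (hs : 2 ≤ s) :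
    x ^ (2 - s) / (2 * (x + 1)) ≤ r ^ (2 - s) / (2 * (r + 1)) := by
  have hx : 0 < x := lt_of_lt_of_le hr hrx
  rw [div_le_div_iff₀ (by linarith) (by linarith)]
  have hd : 1 ≤ x / r := (one_le_div hr).mpr hrx
  have key : ∀ t : ℝ, t ≤ 0 → x ^ t ≤ r ^ t := by
    intro t ht
    have h1 : (x / r) ^ t ≤ 1 := Real.rpow_le_one_of_one_le_of_nonpos hd ht
    rw [Real.div_rpow hx.le hr.le] at h1
    have h2 : (0:ℝ) < r ^ t := Real.rpow_pos_of_pos hr t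
    calc x ^ t = (x ^ t / r ^ t) * r ^ t := by field_simp
    _ ≤ 1 * r ^ t := by apply mul_le_mul_of_nonneg_right h1 h2.le
    _ = r ^ t := by ring
  have h1 : x ^ (2 - s - 1) ≤ r ^ (2 - s - 1) := key _ (by linarith)
  have h1' : x ^ (2 - s) ≤ r ^ (2 - s) := key _ (by linarith)
  have h2 : r ^ (2 - s) = r ^ (2 - s - 1) * r := by
    rw [← Real.rpow_add_one hr.ne']; ring_nf
  have h3 : x ^ (2 - s) = x ^ (2 - s - 1) * x := by
    rw [← Real.rpow_add_one hx.ne']; ring_nf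
  have h4 : (0:ℝ) < x ^ (2 - s - 1) := Real.rpow_pos_of_pos hx _
  nlinarith [mul_pos hr hx]

end AuxStmt11

theorem stmt11 {n : ℕ} (hn : 2 ≤ n) (p q : Fin n → ℝ)
    (hp : ∀ i, 0 < p i) (hq : ∀ i, 0 < q i)
    (hp1 : ∑ i, p i = 1) (hq1 : ∑ i, q i = 1)
    (r R : ℝ) (hr : 0 < r)
    (hlow : ∀ i, r ≤ p i / q i) (hupp : ∀ i, p i / q i ≤ R) (s : ℝ) :
    (s ≤ 1 →
      (r ^ (2 - s) / (2 * (r + 1))) * Phi s p q ≤ relAG q p ∧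
        relAG q p ≤ (R ^ (2 - s) / (2 * (R + 1))) * Phi s p q) ∧
    (2 ≤ s →
      (R ^ (2 - s) / (2 * (R + 1))) * Phi s p q ≤ relAG q p ∧
        relAG q p ≤ (r ^ (2 - s) / (2 * (r + 1))) * Phi s p q) := by
  have hrR : r ≤ R := le_trans (hlow ⟨0, by omega⟩) (hupp ⟨0, by omega⟩)
  have hR : 0 < R := lt_of_lt_of_le hr hrR
  have hmem : ∀ i, p i / q i ∈ Set.Icc r R := fun i => ⟨hlow i, hupp i⟩
  have hsplit : ∀ c : ℝ, ∑ i, q i * (gG (p i / q i) - c * phiG s (p i / q i))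
      = relAG q p - c * Phi s p q := by
    intro c
    rw [show (∑ i, q i * (gG (p i / q i) - c * phiG s (p i / q i)))
        = ∑ i, (q i * gG (p i / q i) - c * (q i * phiG s (p i / q i))) from
      Finset.sum_congr rfl fun i _ => by ring]
    rw [Finset.sum_sub_distrib, ← Finset.mul_sum, sum_gG p q hp hq, sum_phiG p q s hp hq hq1]
  have key_lo : ∀ c : ℝ, (∀ x ∈ Set.Icc r R, c * x ^ (s - 2) ≤ (2 * (x + 1))⁻¹) →
      c * Phi s p q ≤ relAG q p := by
    intro c hc
    have hconv : ConvexOn ℝ (Set.Icc r R) (fun x => gG x - c * phiG s x) := by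
      apply convexOn_aux (f' := fun x => gG' x - c * phiG' s x)
        (f'' := fun x => (2 * (x + 1))⁻¹ - c * x ^ (s - 2))
        (convex_Icc r R) (fun x hx => lt_of_lt_of_le hr hx.1)
      · intro x hx; exact (gG_hasDeriv hx).sub ((phiG_hasDeriv s hx).const_mul c)
      · intro x hx; exact (gG'_hasDeriv hx).sub ((phiG'_hasDeriv s hx).const_mul c)
      · intro x hx; have := hc x hx; linarith
    have h0 := jensen_core p q hp hq hp1 hq1 _ hconv
      (by rw [gG_one, phiG_one]; ring) hmem
    rw [hsplit c] at h0
    linarith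
  have key_hi : ∀ c : ℝ, (∀ x ∈ Set.Icc r R, (2 * (x + 1))⁻¹ ≤ c * x ^ (s - 2)) →
      relAG q p ≤ c * Phi s p q := by
    intro c hc
    have hconv : ConvexOn ℝ (Set.Icc r R) (fun x => c * phiG s x - gG x) := by
      apply convexOn_aux (f' := fun x => c * phiG' s x - gG' x)
        (f'' := fun x => c * x ^ (s - 2) - (2 * (x + 1))⁻¹)
        (convex_Icc r R) (fun x hx => lt_of_lt_of_le hr hx.1)
      · intro x hx; exact ((phiG_hasDeriv s hx).const_mul c).sub (gG_hasDeriv hx)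
      · intro x hx; exact ((phiG'_hasDeriv s hx).const_mul c).sub (gG'_hasDeriv hx)
      · intro x hx; have := hc x hx; linarith
    have h0 := jensen_core p q hp hq hp1 hq1 _ hconv
      (by rw [gG_one, phiG_one]; ring) hmem
    have hsplit' : ∑ i, q i * (c * phiG s (p i / q i) - gG (p i / q i))
        = -(relAG q p - c * Phi s p q) := by
      rw [← hsplit c, ← Finset.sum_neg_distrib]
      exact Finset.sum_congr rfl fun i _ => by ring
    rw [hsplit'] at h0
    linarith
  have cond_lo : ∀ c x : ℝ, 0 < x → c ≤ x ^ (2 - s) / (2 * (x + 1)) →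
      c * x ^ (s - 2) ≤ (2 * (x + 1))⁻¹ := by
    intro c x hx h
    have hxs : (0:ℝ) < x ^ (s - 2) := Real.rpow_pos_of_pos hx _
    calc c * x ^ (s - 2) ≤ x ^ (2 - s) / (2 * (x + 1)) * x ^ (s - 2) :=
          mul_le_mul_of_nonneg_right h hxs.le
      _ = (2 * (x + 1))⁻¹ := by
          rw [div_mul_eq_mul_div, ← Real.rpow_add hx, show 2 - s + (s - 2) = 0 by ring,
            Real.rpow_zero, one_div]
  have cond_hi : ∀ c x : ℝ, 0 < x → x ^ (2 - s) / (2 * (x + 1)) ≤ c →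
      (2 * (x + 1))⁻¹ ≤ c * x ^ (s - 2) := by
    intro c x hx h
    have hxs : (0:ℝ) < x ^ (s - 2) := Real.rpow_pos_of_pos hx _
    calc (2 * (x + 1))⁻¹ = x ^ (2 - s) / (2 * (x + 1)) * x ^ (s - 2) := by
          rw [div_mul_eq_mul_div, ← Real.rpow_add hx, show 2 - s + (s - 2) = 0 by ring,
            Real.rpow_zero, one_div]
      _ ≤ c * x ^ (s - 2) := mul_le_mul_of_nonneg_right h hxs.le
  constructor
  · intro hs
    constructor
    · exact key_lo _ fun x hx => cond_lo _ x (lt_of_lt_of_le hr hx.1)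
        (eta_mono_le hr hx.1 hs)
    · exact key_hi _ fun x hx => cond_hi _ x (lt_of_lt_of_le hr hx.1)
        (eta_mono_le (lt_of_lt_of_le hr hx.1) hx.2 hs)
  · intro hs
    constructor
    · exact key_lo _ fun x hx => cond_lo _ x (lt_of_lt_of_le hr hx.1)
        (eta_anti_le (lt_of_lt_of_le hr hx.1) hx.2 hs)
    · exact key_hi _ fun x hx => cond_hi _ x (lt_of_lt_of_le hr hx.1)
        (eta_anti_le hr hx.1 hs)
end
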